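/- arXiv:2205.13176 — 3 statements merged into one kernel-verified Lean document; each statement's English description precedes it below -/
import Mathlib

section
/- Consider a majority-vote ensemble of G sub-classifiers predicting class ŷ on input x with vote counts o_x : 𝒴 → ℕ satisfying Σ_y o_x(y) = G, where ŷ is the majority class (ties broken by smallest index). Suppose an attacker controls a set of sub-classifiers indexed by a set I ⊆ {0,...,G-1} and can set their votes arbitrarily. Then the ensemble prediction on x can be changed if and only if there exists a class y ≠ ŷ with o_x(ŷ) − c_I(ŷ) < o_x(y) + (|I| − c_I(y)) + [y < ŷ], where c_I(z) is the number of controlled sub-classifiers originally voting z and [y < ŷ] is 1 if y has smaller index than ŷ and 0 otherwise (with the strict inequality interpreted as: the lower bound on ŷ-votes is less than the upper bound on y-votes, or equal with y having smaller index). -/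
/-!
Only the votes of the controlled sub-classifiers in `I` can move, so after any attack class `z`
receives between `o(z) - c_I(z)` and `o(z) + (|I| - c_I(z))` votes. Both extremes are reached at
once by redirecting every controlled vote to the challenger `y`, which therefore is an optimal
attack; comparing these extremes under smallest-index tie-breaking gives the criterion.
-/

open Finset

section VoteCounts

variable {α β : Type*} [DecidableEq α] [DecidableEq β]

theorem filter_ite_mem_eq_self (f : α → β) (I : Finset α) (y : β) :
    I.filter (fun a => (if a ∈ I then y else f a) = y) = I :=
  filter_true_of_mem fun _ ha => if_pos ha

theorem filter_ite_mem_eq_empty (f : α → β) (I : Finset α) {y z : β} (hzy : z ≠ y) :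
    I.filter (fun a => (if a ∈ I then y else f a) = z) = ∅ :=
  filter_false_of_mem fun _ ha => by rw [if_pos ha]; exact hzy.symm

variable [Fintype α]

theorem card_filter_univ_eq_add_card_filter_compl (I : Finset α) (p : α → Prop)
    [DecidablePred p] : #(univ.filter p) = #(I.filter p) + #(Iᶜ.filter p) := by
  rw [← card_union_of_disjoint (disjoint_filter_filter disjoint_compl_right), ← filter_union,
    union_compl]

theorem card_fiber_add_card_fiber_inter_eq_of_eqOn_compl {f f' : α → β} {I : Finset α}
    (hf' : ∀ a ∉ I, f' a = f a) (z : β) :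
    #(univ.filter (fun a => f' a = z)) + #(I.filter (fun a => f a = z)) =
      #(univ.filter (fun a => f a = z)) + #(I.filter (fun a => f' a = z)) := by
  have houtside : Iᶜ.filter (fun a => f' a = z) = Iᶜ.filter (fun a => f a = z) :=
    filter_congr fun a ha => by rw [hf' a (mem_compl.mp ha)]
  rw [card_filter_univ_eq_add_card_filter_compl I, card_filter_univ_eq_add_card_filter_compl I,
    houtside]
  omega

end VoteCounts

theorem stmt7_general {G C : ℕ} (f : Fin G → Fin C) (yh : Fin C)
    (I : Finset (Fin G)) :
    (∃ f' : Fin G → Fin C, (∀ g ∉ I, f' g = f g) ∧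
      ∃ y : Fin C, y ≠ yh ∧
        ((univ.filter (fun g => f' g = yh)).card < (univ.filter (fun g => f' g = y)).card ∨
         ((univ.filter (fun g => f' g = y)).card = (univ.filter (fun g => f' g = yh)).card ∧
          y < yh))) ↔
    (∃ y : Fin C, y ≠ yh ∧
      (univ.filter (fun g => f g = yh)).card - (I.filter (fun g => f g = yh)).card <
        (univ.filter (fun g => f g = y)).card +
          (I.card - (I.filter (fun g => f g = y)).card) +
          (if y < yh then 1 else 0)) := by
  constructor
  · rintro ⟨f', hf', y, hy, hwin⟩
    have hyh := card_fiber_add_card_fiber_inter_eq_of_eqOn_compl hf' yh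
    have hy' := card_fiber_add_card_fiber_inter_eq_of_eqOn_compl hf' y
    have hcI := card_filter_le I (fun g => f g = y)
    have hcI' := card_filter_le I (fun g => f' g = y)
    refine ⟨y, hy, ?_⟩
    split_ifs <;> omega
  · rintro ⟨y, hy, hlt⟩
    let f' : Fin G → Fin C := fun g => if g ∈ I then y else f g
    have hf' : ∀ g ∉ I, f' g = f g := fun g hg => if_neg hg
    have hyh := card_fiber_add_card_fiber_inter_eq_of_eqOn_compl hf' yh
    have hy' := card_fiber_add_card_fiber_inter_eq_of_eqOn_compl hf' y
    rw [filter_ite_mem_eq_empty f I hy.symm, card_empty] at hyh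
    rw [filter_ite_mem_eq_self f I y] at hy'
    have hcI := card_filter_le I (fun g => f g = y)
    refine ⟨f', hf', y, hy, ?_⟩
    split_ifs at hlt <;> omega

open Finset in
/-- Majority-vote ensemble of `G` sub-classifiers over classes `Fin C` (smallest-index
tie-breaking), attacker controlling the sub-classifiers in `I`: the prediction `yh` on `x`
can be changed iff there is a class `y ≠ yh` with
`o(yh) − c_I(yh) < o(y) + (|I| − c_I(y)) + [y < yh]`. -/
theorem stmt7 {G C : ℕ} (f : Fin G → Fin C) (yh : Fin C)
    (hmaj : ∀ y : Fin C,
      (univ.filter (fun g => f g = y)).card ≤ (univ.filter (fun g => f g = yh)).card ∧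
      ((univ.filter (fun g => f g = y)).card = (univ.filter (fun g => f g = yh)).card →
        yh ≤ y))
    (I : Finset (Fin G)) :
    (∃ f' : Fin G → Fin C, (∀ g ∉ I, f' g = f g) ∧
      ∃ y : Fin C, y ≠ yh ∧
        ((univ.filter (fun g => f' g = yh)).card < (univ.filter (fun g => f' g = y)).card ∨
         ((univ.filter (fun g => f' g = y)).card = (univ.filter (fun g => f' g = yh)).card ∧
          y < yh))) ↔
    (∃ y : Fin C, y ≠ yh ∧
      (univ.filter (fun g => f g = yh)).card - (I.filter (fun g => f g = yh)).card <
        (univ.filter (fun g => f g = y)).card +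
          (I.card - (I.filter (fun g => f g = y)).card) +
          (if y < yh then 1 else 0)) :=
  stmt7_general f yh I
end

section
/- Let Ω = {x_j ∈ D_test : o_{x_j}(ŷ_j) − max_{y≠ŷ_j}(o_{x_j}(y) + [y < ŷ_j]) > 2·B} where B is an upper bound on the total number of sub-classifiers any feasible attack can influence. Then for every x_j ∈ Ω, i.e. every x_j with margin strictly greater than 2B, no feasible attack can change the prediction on x_j. Hence M_ATK over D_test equals M_ATK over the breakable set D_test \ Ω = {x_j : margin ≤ 2B}. -/
open Finset

/-- Attack controlling `Ictrl` changes the majority-vote prediction (original prediction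
`yh x`, smallest-index tie-breaking) on test point `x`. -/
def changedBy {X : Type*} (G C : ℕ) (f : X → Fin G → Fin C) (yh : X → Fin C)
    (Ictrl : Finset (Fin G)) (x : X) : Prop :=
  ∃ f' : Fin G → Fin C, (∀ g ∉ Ictrl, f' g = f x g) ∧
    ∃ y : Fin C, y ≠ yh x ∧
      ((univ.filter (fun g => f' g = yh x)).card < (univ.filter (fun g => f' g = y)).card ∨
       ((univ.filter (fun g => f' g = y)).card = (univ.filter (fun g => f' g = yh x)).card ∧
        y < yh x))

/-- The margin of the prediction on `x`:
`o_x(yh) − max_{y ≠ yh} (o_x(y) + [y < yh])`. -/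
def margin {X : Type*} (G C : ℕ) (f : X → Fin G → Fin C) (yh : X → Fin C) (x : X) : ℕ :=
  (univ.filter (fun g => f x g = yh x)).card -
    (univ.filter (fun y : Fin C => y ≠ yh x)).sup
      (fun y => (univ.filter (fun g => f x g = y)).card + (if y < yh x then 1 else 0))

/-- If every feasible attack controls at most `B` sub-classifiers, then every test point with
margin strictly greater than `2B` is unbreakable, and hence `M_ATK` over the whole testset
equals `M_ATK` over the breakable set `{x : margin x ≤ 2B}`. -/
theorem stmt9 {X A : Type*} (G C B : ℕ) (f : X → Fin G → Fin C) (yh : X → Fin C)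
    (hmaj : ∀ (x : X) (y : Fin C),
      (univ.filter (fun g => f x g = y)).card ≤ (univ.filter (fun g => f x g = yh x)).card ∧
      ((univ.filter (fun g => f x g = y)).card = (univ.filter (fun g => f x g = yh x)).card →
        yh x ≤ y))
    (𝒜 : Finset A) (Ictrl : A → Finset (Fin G))
    (hB : ∀ a ∈ 𝒜, (Ictrl a).card ≤ B) (D : Finset X) :
    (∀ x ∈ D, 2 * B < margin G C f yh x → ∀ a ∈ 𝒜, ¬ changedBy G C f yh (Ictrl a) x) ∧
    (𝒜.sup (fun a => (@Finset.filter X (changedBy G C f yh (Ictrl a)) (Classical.decPred _) D).card) =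
     𝒜.sup (fun a => (@Finset.filter X (changedBy G C f yh (Ictrl a)) (Classical.decPred _)
        (D.filter (fun x => margin G C f yh x ≤ 2 * B))).card)) := by
  classical
  have key : ∀ x : X, 2 * B < margin G C f yh x → ∀ a ∈ 𝒜, ¬ changedBy G C f yh (Ictrl a) x := by
    intro x hm a ha hc
    obtain ⟨f', hf', y, hy, hcase⟩ := hc
    have hIc : (Ictrl a).card ≤ B := hB a ha
    have hlow : (univ.filter (fun g => f x g = yh x)).card ≤
        (univ.filter (fun g => f' g = yh x)).card + (Ictrl a).card := by
      have hsub : univ.filter (fun g => f x g = yh x) ⊆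
          (univ.filter (fun g => f' g = yh x)) ∪ Ictrl a := by
        intro g hg
        simp only [mem_filter, mem_univ, true_and] at hg
        by_cases hgI : g ∈ Ictrl a
        · exact mem_union_right _ hgI
        · refine mem_union_left _ ?_
          simp only [mem_filter, mem_univ, true_and]
          rw [hf' g hgI]; exact hg
      calc (univ.filter (fun g => f x g = yh x)).card ≤ _ := card_le_card hsub
        _ ≤ _ := card_union_le _ _
    have hhigh : (univ.filter (fun g => f' g = y)).card ≤
        (univ.filter (fun g => f x g = y)).card + (Ictrl a).card := by
      have hsub : univ.filter (fun g => f' g = y) ⊆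
          (univ.filter (fun g => f x g = y)) ∪ Ictrl a := by
        intro g hg
        simp only [mem_filter, mem_univ, true_and] at hg
        by_cases hgI : g ∈ Ictrl a
        · exact mem_union_right _ hgI
        · refine mem_union_left _ ?_
          simp only [mem_filter, mem_univ, true_and]
          rw [← hf' g hgI]; exact hg
      calc (univ.filter (fun g => f' g = y)).card ≤ _ := card_le_card hsub
        _ ≤ _ := card_union_le _ _
    have h1 : (univ.filter (fun g => f x g = y)).card + (if y < yh x then 1 else 0) ≤
        (univ.filter (fun z : Fin C => z ≠ yh x)).sup
          (fun z => (univ.filter (fun g => f x g = z)).card + (if z < yh x then 1 else 0)) :=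
      Finset.le_sup (f := fun z : Fin C => (univ.filter (fun g => f x g = z)).card + (if z < yh x then 1 else 0)) (mem_filter.mpr ⟨mem_univ y, hy⟩)
    rw [margin, Nat.lt_sub_iff_add_lt] at hm
    by_cases hyl : y < yh x
    · rw [if_pos hyl] at h1
      rcases hcase with h | h <;> omega
    · rw [if_neg hyl] at h1
      rcases hcase with h | h
      · omega
      · exact absurd h.2 hyl
  refine ⟨fun x _ h => key x h, ?_⟩
  apply Finset.sup_congr rfl
  intro a ha
  congr 1
  ext x
  simp only [Finset.mem_filter]
  constructor
  · rintro ⟨hx, hc⟩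
    refine ⟨⟨hx, ?_⟩, hc⟩
    by_contra h
    exact key x (by omega) a ha hc
  · rintro ⟨⟨hx, _⟩, hc⟩; exact ⟨hx, hc⟩
end

section
/- In hash bagging with exactly one hash function (G = Ĝ, partition case), each sample lies in exactly one sub-trainset, so each insertion or deletion influences at most 1 sub-trainset and each modification influences at most 2 sub-trainsets; consequently, the minimum number r of modifications required to influence strictly more than G/2 sub-classifiers satisfies r ≥ ⌈(⌊G/2⌋+1)/2⌉, and the minimum number r of insertions (or deletions) required to influence strictly more than G/2 sub-classifiers satisfies r ≥ ⌊G/2⌋ + 1. -/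
/-- In partition-based hash bagging, each modification influences at most 2 sub-trainsets and
each insertion/deletion influences at most 1. Hence if an influenced set `Cinf` of
sub-classifiers covers strictly more than `G/2` of them, then: with modifications only
(`|Cinf| ≤ 2·r_mod`) the budget satisfies `r_mod ≥ ⌈(⌊G/2⌋+1)/2⌉`, and with insertions
(or deletions) only (`|Cinf| ≤ r_ins`) it satisfies `r_ins ≥ ⌊G/2⌋ + 1`. -/
theorem stmt13 (G : ℕ) :
    (∀ (r_mod : ℕ) (Cinf : Finset (Fin G)),
      Cinf.card ≤ 2 * r_mod → G < 2 * Cinf.card → (G / 2 + 1 + 1) / 2 ≤ r_mod) ∧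
    (∀ (r_ins : ℕ) (Cinf : Finset (Fin G)),
      Cinf.card ≤ r_ins → G < 2 * Cinf.card → G / 2 + 1 ≤ r_ins) := by
  constructor <;> intro r Cinf h1 h2 <;>
    have h3 : Cinf.card ≤ G := by
      simpa using Cinf.card_le_card (Finset.subset_univ Cinf)
  all_goals omega
end
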